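/- arXiv:2007.14512 — 2 statements merged into one kernel-verified Lean document; each statement's English description precedes it below -/
import Mathlib

section
/- Let J_1, …, J_m be subintervals of [n], let the star network G = G_{J_1} ∘ ⋯ ∘ G_{J_m} have weighted path matrix B, and fix w ∈ S_n. Then the coefficient of T_w in the natural-basis expansion of C̃_{s_{J_1}}(q) ⋯ C̃_{s_{J_m}}(q) ∈ H_n(q) is equal to q^{-ℓ(w)/2} σ_B(x^{e,w}). -/
/- Common combinatorial setup: star networks, covering path families,
   crossing/noncrossing statistics, and the base ring ℤ[q^{1/2},q^{-1/2}]. -/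

open Equiv Finset
open scoped Classical

noncomputable section

/-- The ring `ℤ[q^{1/2}, q^{-1/2}]`, realized as Laurent polynomials in the
variable `q^{1/2}` (so the exponent-`k` monomial is `q^{k/2}`). -/
abbrev R2 : Type := LaurentPolynomial ℤ

/-- `q^{k/2}`. -/
def Qp (k : ℤ) : R2 := LaurentPolynomial.T k

/-- `q`. -/
def qq : R2 := LaurentPolynomial.T 2

/-- Coxeter length of a permutation, i.e. its inversion number. -/
def len {n : ℕ} (w : Perm (Fin n)) : ℕ :=
  ((univ : Finset (Fin n × Fin n)).filter fun p => p.1 < p.2 ∧ w p.2 < w p.1).card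

/-- Membership in the interval `J = [a,b] ⊆ [n]`. -/
def memJ {n : ℕ} (J : Fin n × Fin n) (i : Fin n) : Prop := J.1 ≤ i ∧ i ≤ J.2

/-- Membership in the subgroup `S_J ≤ S_n` generated by the adjacent
transpositions `s_a, …, s_{b-1}` of the interval `J = [a,b]`; equivalently,
the permutations supported on `[a,b]`. -/
def inSJ {n : ℕ} (J : Fin n × Fin n) (w : Perm (Fin n)) : Prop :=
  ∀ i, w i ≠ i → memJ J i

/-- A path family covering the star network `G_{J_1} ∘ ⋯ ∘ G_{J_m}` is
faithfully encoded by the permutation of the wire positions realized at each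
simple-star factor: at factor `p` the paths whose current positions lie in
`J_p` pass through the central vertex and are permuted arbitrarily within
`J_p` (every entering and leaving edge being used exactly once), while all
other paths use their unique horizontal edge.  Thus a covering family is a
sequence `vs` of permutations with `vs p` supported on `J_p`. -/
def IsPathFamily {n m : ℕ} (Js : Fin m → Fin n × Fin n)
    (vs : Fin m → Perm (Fin n)) : Prop :=
  ∀ p, inSJ (Js p) (vs p)

/-- The position of the path starting at source `i` just before factor `k`
(as a permutation of sources). -/
def posAt {n m : ℕ} (vs : Fin m → Perm (Fin n)) (k : ℕ) : Perm (Fin n) :=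
  (((List.ofFn vs).take k).reverse).prod

/-- The type of a covering path family: the path starting at source `i`
terminates at sink `typeOf vs i`. -/
def typeOf {n m : ℕ} (vs : Fin m → Perm (Fin n)) : Perm (Fin n) := posAt vs m

/-- The path from source `i` passes through the central vertex of the factor
`G_{J_p}`. -/
def centeredAt {n m : ℕ} (Js : Fin m → Fin n × Fin n) (vs : Fin m → Perm (Fin n))
    (p : Fin m) (i : Fin n) : Prop :=
  (Js p).1 < (Js p).2 ∧ memJ (Js p) (posAt vs p i)

/-- The paths from sources `i` and `j` both pass through the central vertex of
the factor `G_{J_p}`. -/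
def meetAt {n m : ℕ} (Js : Fin m → Fin n × Fin n) (vs : Fin m → Perm (Fin n))
    (p : Fin m) (i j : Fin n) : Prop :=
  centeredAt Js vs p i ∧ centeredAt Js vs p j

/-- The triple `(π_i, π_j, p)` is a crossing: the two paths intersect at the
central vertex of `G_{J_p}` and cross there. -/
def crossingAt {n m : ℕ} (Js : Fin m → Fin n × Fin n) (vs : Fin m → Perm (Fin n))
    (p : Fin m) (i j : Fin n) : Prop :=
  meetAt Js vs p i j ∧
    ¬ ((posAt vs p i < posAt vs p j) ↔ (posAt vs (p.1 + 1) i < posAt vs (p.1 + 1) j))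

/-- `cross(π)`: the number of crossings of the path family. -/
def crossNum {n m : ℕ} (Js : Fin m → Fin n × Fin n)
    (vs : Fin m → Perm (Fin n)) : ℕ :=
  ((univ : Finset ((Fin n × Fin n) × Fin m)).filter fun x =>
    x.1.1 < x.1.2 ∧ crossingAt Js vs x.2 x.1.1 x.1.2).card

/-- The triple `(π_i, π_j, p)` is a noncrossing with `π_i` entering and
leaving the central vertex of `G_{J_p}` below `π_j`. -/
def noncrossBelow {n m : ℕ} (Js : Fin m → Fin n × Fin n) (vs : Fin m → Perm (Fin n))
    (p : Fin m) (i j : Fin n) : Prop :=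
  meetAt Js vs p i j ∧
    posAt vs p i < posAt vs p j ∧ posAt vs (p.1 + 1) i < posAt vs (p.1 + 1) j

/-- `incross(U)` for a tableau `U` containing the paths of `π`, recorded via
the function `col` assigning to each path (index) the index of the column of
`U` containing it: the number of inverted noncrossings, i.e. noncrossings
`(π_i, π_j, p)` (with `π_i` below `π_j`) such that `π_j` lies in an earlier
column of `U` than `π_i`. -/
def incrossNum {n m : ℕ} (Js : Fin m → Fin n × Fin n) (vs : Fin m → Perm (Fin n))
    (col : Fin n → ℕ) : ℕ :=
  ((univ : Finset ((Fin n × Fin n) × Fin m)).filter fun x =>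
    noncrossBelow Js vs x.2 x.1.1 x.1.2 ∧ col x.1.2 < col x.1.1).card

/-- The number of crossings of the two paths `π_i, π_j` strictly before the
factor `G_{J_p}`. -/
def crossBefore {n m : ℕ} (Js : Fin m → Fin n × Fin n) (vs : Fin m → Perm (Fin n))
    (p : Fin m) (i j : Fin n) : ℕ :=
  ((univ : Finset (Fin m)).filter fun k => k < p ∧ crossingAt Js vs k i j).card

/-- The triple `(π_i, π_j, p)` is defective: the paths meet at the central
vertex of `G_{J_p}` having previously crossed an odd number of times. -/
def defectiveAt {n m : ℕ} (Js : Fin m → Fin n × Fin n) (vs : Fin m → Perm (Fin n))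
    (p : Fin m) (i j : Fin n) : Prop :=
  meetAt Js vs p i j ∧ Odd (crossBefore Js vs p i j)

/-- `dfct(π)`: the number of defective triples of the path family. -/
def dfctNum {n m : ℕ} (Js : Fin m → Fin n × Fin n)
    (vs : Fin m → Perm (Fin n)) : ℕ :=
  ((univ : Finset ((Fin n × Fin n) × Fin m)).filter fun x =>
    x.1.1 < x.1.2 ∧ defectiveAt Js vs x.2 x.1.1 x.1.2).card

/-- `cdncross(W)`: the number of defective noncrossings between pairs of
paths appearing in the same column of the tableau recorded by `col`. -/
def cdncrossNum {n m : ℕ} (Js : Fin m → Fin n × Fin n) (vs : Fin m → Perm (Fin n))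
    (col : Fin n → ℕ) : ℕ :=
  ((univ : Finset ((Fin n × Fin n) × Fin m)).filter fun x =>
    x.1.1 < x.1.2 ∧ defectiveAt Js vs x.2 x.1.1 x.1.2 ∧
      ¬ crossingAt Js vs x.2 x.1.1 x.1.2 ∧ col x.1.1 = col x.1.2).card

/-- The adjacent transposition `s_{i+1}` (0-indexed: swaps positions `i` and
`i+1`). -/
def swp {n : ℕ} (i : ℕ) (h : i + 1 < n) : Perm (Fin n) :=
  Equiv.swap ⟨i, by omega⟩ ⟨i + 1, h⟩

end
/- The weight monomial statistics: the coefficient `[z_G] b_{1,w_1} ⋯ b_{n,w_n}`.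
Expanding the product of path-matrix entries distributively, each term is the
weight word of a choice of a path from source `i` to sink `w i` for each `i`;
the coefficient of the square-free monomial `z_G` vanishes unless the chosen
paths form a covering family, and for a covering family the weight word,
sorted into lexicographic order using the relations
`z_{h_2,p,k} z_{h_1,p,k} = q^{1/2} z_{h_1,p,k} z_{h_2,p,k}` (`h_1 < h_2`),
contributes `q^{inv/2}` where `inv` counts the pairs of variables appearing
out of lexicographic order. -/

noncomputable section
open Equiv Finset
open scoped Classical

/-- The number of out-of-order pairs of variables in the weight word
`wgt(π_1) ⋯ wgt(π_n)` of a covering path family: for sources `i < j`, the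
variables of path `i` precede those of path `j`, and a pair of entering
(resp. leaving) variables at a common factor `p` is out of lexicographic
order exactly when path `j` is below path `i` entering (resp. leaving) the
central vertex of `G_{J_p}`. -/
def wordInv {n m : ℕ} (Js : Fin m → Fin n × Fin n)
    (vs : Fin m → Perm (Fin n)) : ℕ :=
  ((univ : Finset ((Fin n × Fin n) × Fin m × Fin 2)).filter fun x =>
    x.1.1 < x.1.2 ∧ meetAt Js vs x.2.1 x.1.1 x.1.2 ∧
      ((x.2.2 = 0 ∧ posAt vs x.2.1 x.1.2 < posAt vs x.2.1 x.1.1) ∨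
       (x.2.2 = 1 ∧ posAt vs (x.2.1.1 + 1) x.1.2 < posAt vs (x.2.1.1 + 1) x.1.1))).card

/-- `σ_B(x^{e,w}) = [z_G] b_{1,w_1} ⋯ b_{n,w_n}`, where `B` is the weighted
path matrix of the star network `G = G_{J_1} ∘ ⋯ ∘ G_{J_m}`. -/
def zGcoeff {n m : ℕ} (Js : Fin m → Fin n × Fin n) (w : Perm (Fin n)) : R2 :=
  ∑ vs ∈ (univ : Finset (Fin m → Perm (Fin n))).filter
      (fun vs => IsPathFamily Js vs ∧ typeOf vs = w),
    Qp (wordInv Js vs : ℤ)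

end
/- The Hecke algebra `H_n(q)`, presented abstractly: a ring `H` which is an
algebra over `R2 = ℤ[q^{1/2},q^{-1/2}]` together with a family
`T : S_n → H` (the natural basis) satisfying `T_e = 1` and the defining
right-multiplication rule by the generators `T_{s_i}`.  Group products of
permutations are written so that the product `v w` of the paper corresponds
to the composition `w * v` of `Equiv.Perm`. -/

noncomputable section
open Equiv Finset
open scoped Classical

/-- The defining relations of the Hecke algebra in terms of the natural
basis: `T_e = 1` and
`T_w T_{s_i} = T_{w s_i}` if `ℓ(w s_i) > ℓ(w)`, and
`T_w T_{s_i} = q T_{w s_i} + (q-1) T_w` otherwise. -/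
def HeckeOK {n : ℕ} {H : Type*} [Ring H] [Algebra R2 H]
    (T : Perm (Fin n) → H) : Prop :=
  T 1 = 1 ∧
    ∀ (w : Perm (Fin n)) (i : ℕ) (h : i + 1 < n),
      T w * T (swp i h) =
        if len w < len (swp i h * w) then T (swp i h * w)
        else qq • T (swp i h * w) + (qq - 1) • T w

/-- The (modified) Kazhdan–Lusztig basis element
`C̃_{s_J}(q) = Σ_{v ∈ S_J} T_v`. -/
def CJ {n : ℕ} {H : Type*} [Ring H] [Algebra R2 H]
    (T : Perm (Fin n) → H) (J : Fin n × Fin n) : H :=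
  ∑ v ∈ (univ : Finset (Perm (Fin n))).filter (fun v => inSJ J v), T v

/-- The product `C̃_{s_{J_1}}(q) ⋯ C̃_{s_{J_m}}(q)`. -/
def Cprod {n m : ℕ} {H : Type*} [Ring H] [Algebra R2 H]
    (T : Perm (Fin n) → H) (Js : Fin m → Fin n × Fin n) : H :=
  (List.ofFn (fun p => CJ T (Js p))).prod

end

/-
Write `inv_J(u)` for the number of inversions of `u` whose two values lie in the interval `J`.
For an adjacent transposition `s ∈ S_J` one has `T_s C̃_{s_J} = q C̃_{s_J}` (split `S_J` into
pairs `{v, v s}`), and peeling such `s` off `u` until no `J`-inversion is left, where lengths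
add, gives `T_u C̃_{s_J} = q^{inv_J(u)} Σ_{v ∈ S_J} T_{vu}`. Multiplying in the factors one at a
time, `C̃_{s_{J_1}} ⋯ C̃_{s_{J_m}}` is the sum over covering path families `π` of
`q^{E(π)} T_{type(π)}`, where `E(π) = Σ_p inv_{J_p}(π before factor p)`.

On the network side, the out-of-order pairs of entering (leaving) variables at factor `p` are the
`J_p`-inversions of the path positions just before (after) the factor. Since
`ℓ(vu) - ℓ(u) = inv_J(vu) - inv_J(u)` for `v ∈ S_J`, their total telescopes to
`ℓ(type(π)) + 2 E(π)`, so `q^{-ℓ(w)/2} σ_B(x^{e,w}) = Σ_{type(π) = w} q^{E(π)}` as well.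
-/

noncomputable section
open Equiv Finset
open scoped Classical

section Permutations

variable {n : ℕ}

def inversionsOn (Q : Set (Fin n)) (w : Perm (Fin n)) : ℕ :=
  ((univ : Finset (Fin n × Fin n)).filter fun p =>
    p.1 < p.2 ∧ w p.1 ∈ Q ∧ w p.2 ∈ Q ∧ w p.2 < w p.1).card

def inversionPairs (w : Perm (Fin n)) : Finset (Fin n × Fin n) :=
  (univ : Finset (Fin n × Fin n)).filter fun p => p.1 < p.2 ∧ w p.2 < w p.1

lemma mem_inversionPairs {w : Perm (Fin n)} {p : Fin n × Fin n} :
    p ∈ inversionPairs w ↔ p.1 < p.2 ∧ w p.2 < w p.1 := by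
  simp [inversionPairs]

lemma len_eq_card_inversionPairs (w : Perm (Fin n)) : len w = (inversionPairs w).card := rfl

lemma len_eq_inversionsOn_univ (w : Perm (Fin n)) : len w = inversionsOn Set.univ w := by
  simp [len, inversionsOn]

lemma len_inv (w : Perm (Fin n)) : len w⁻¹ = len w := by
  refine card_nbij' (fun p => (w⁻¹ p.2, w⁻¹ p.1)) (fun p => (w p.2, w p.1)) ?_ ?_ ?_ ?_ <;>
    intro p hp <;> simp_all

lemma len_eq_zero_iff {w : Perm (Fin n)} : len w = 0 ↔ w = 1 := by
  refine ⟨fun h => ?_, fun h => by simpa [h, len] using fun _ _ => le_of_lt⟩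
  have hmono : StrictMono w := fun i j hij => by
    by_contra! hji
    have hne : w j ≠ w i := fun e => hij.ne (w.injective e).symm
    have hmem : (i, j) ∈ inversionPairs w := mem_inversionPairs.2 ⟨hij, hji.lt_of_ne hne⟩
    rw [len_eq_card_inversionPairs, card_eq_zero] at h
    simp [h] at hmem
  have hrefl : hmono.orderIsoOfSurjective w w.surjective = OrderIso.refl _ := Subsingleton.elim _ _
  ext i
  exact congrArg Fin.val (DFunLike.congr_fun hrefl i)

lemma len_mul_le (x y : Perm (Fin n)) : len (x * y) ≤ len x + len y := by
  have hsub : inversionPairs (x * y) ⊆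
      inversionPairs y ∪ (inversionPairs x).image fun p => (y⁻¹ p.1, y⁻¹ p.2) := by
    rintro ⟨i, j⟩ hij
    rw [mem_inversionPairs, Perm.mul_apply, Perm.mul_apply] at hij
    rcases lt_or_gt_of_ne (y.injective.ne hij.1.ne') with hy | hy
    · exact mem_union_left _ (mem_inversionPairs.2 ⟨hij.1, hy⟩)
    · exact mem_union_right _
        (mem_image.2 ⟨(y i, y j), mem_inversionPairs.2 ⟨hy, hij.2⟩, by simp⟩)
  calc len (x * y) ≤ _ := card_le_card hsub
    _ ≤ len y + len x := (card_union_le _ _).trans (Nat.add_le_add_left card_image_le _)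
    _ = len x + len y := Nat.add_comm _ _

section Support

variable {I : Set (Fin n)} {v : Perm (Fin n)}

lemma mem_of_swap_apply_ne_self {a b : Fin n} (ha : a ∈ I) (hb : b ∈ I) :
    ∀ i, swap a b i ≠ i → i ∈ I := fun i hi => by
  by_cases hia : i = a
  · exact hia ▸ ha
  by_cases hib : i = b
  · exact hib ▸ hb
  exact absurd (swap_apply_of_ne_of_ne hia hib) hi

lemma lt_iff_lt_of_notMem_ordConnected (hI : I.OrdConnected) {a b c : Fin n} (ha : a ∈ I)
    (hb : b ∈ I) (hc : c ∉ I) : (c < a ↔ c < b) ∧ (a < c ↔ b < c) := by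
  have key : ∀ {x y}, x ∈ I → y ∈ I → x ≤ c → c ≤ y → False :=
    fun hx hy h1 h2 => hc (hI.out hx hy ⟨h1, h2⟩)
  refine ⟨⟨fun h => ?_, fun h => ?_⟩, ⟨fun h => ?_, fun h => ?_⟩⟩ <;> by_contra! h'
  · exact key hb ha h' h.le
  · exact key ha hb h' h.le
  · exact key ha hb h.le h'
  · exact key hb ha h.le h'

lemma apply_eq_self_of_supp (hv : ∀ i, v i ≠ i → i ∈ I) {x : Fin n} (hx : x ∉ I) :
    v x = x :=
  not_not.1 (mt (hv x) hx)

lemma apply_mem_iff_of_supp (hv : ∀ i, v i ≠ i → i ∈ I) (x : Fin n) :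
    v x ∈ I ↔ x ∈ I := by
  by_cases hx : x ∈ I
  · refine iff_of_true (by_contra fun hvx => hvx ?_) hx
    have := apply_eq_self_of_supp hv hvx
    rwa [v.injective this]
  · rw [apply_eq_self_of_supp hv hx]

lemma apply_lt_apply_iff_of_supp (hI : I.OrdConnected) (hv : ∀ i, v i ≠ i → i ∈ I)
    {x y : Fin n} (hxy : ¬(x ∈ I ∧ y ∈ I)) : v x < v y ↔ x < y := by
  by_cases hx : x ∈ I
  · have hy : y ∉ I := fun hy => hxy ⟨hx, hy⟩
    rw [apply_eq_self_of_supp hv hy]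
    exact (lt_iff_lt_of_notMem_ordConnected hI ((apply_mem_iff_of_supp hv x).2 hx) hx hy).2
  · rw [apply_eq_self_of_supp hv hx]
    by_cases hy : y ∈ I
    · exact (lt_iff_lt_of_notMem_ordConnected hI ((apply_mem_iff_of_supp hv y).2 hy) hy hx).1
    · rw [apply_eq_self_of_supp hv hy]

lemma inversionsOn_mul_add {Q : Set (Fin n)} (hI : I.OrdConnected) (hIQ : I ⊆ Q)
    (hv : ∀ i, v i ≠ i → i ∈ I) (w : Perm (Fin n)) :
    inversionsOn Q (v * w) + inversionsOn I w = inversionsOn Q w + inversionsOn I (v * w) := by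
  let outer : Perm (Fin n) → Finset (Fin n × Fin n) := fun u =>
    (univ : Finset (Fin n × Fin n)).filter fun p => p.1 < p.2 ∧ u p.1 ∈ Q ∧ u p.2 ∈ Q ∧
      ¬(u p.1 ∈ I ∧ u p.2 ∈ I) ∧ u p.2 < u p.1
  have hsplit : ∀ u, inversionsOn Q u = inversionsOn I u + (outer u).card := by
    intro u
    rw [inversionsOn, inversionsOn,
      ← card_filter_add_card_filter_not (p := fun p => u p.1 ∈ I ∧ u p.2 ∈ I),
      filter_filter, filter_filter]
    congr 2 <;> ext p <;> simp only [outer, mem_filter, mem_univ, true_and]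
    · exact ⟨fun h => ⟨h.1.1, h.2.1, h.2.2, h.1.2.2.2⟩,
        fun h => ⟨⟨h.1, hIQ h.2.1, hIQ h.2.2.1, h.2.2.2⟩, h.2.1, h.2.2.1⟩⟩
    · tauto
  have hmemQ : ∀ x, v x ∈ Q ↔ x ∈ Q := fun x => by
    by_cases hx : x ∈ I
    · exact iff_of_true (hIQ ((apply_mem_iff_of_supp hv x).2 hx)) (hIQ hx)
    · rw [apply_eq_self_of_supp hv hx]
  have houter : outer (v * w) = outer w := by
    refine filter_congr fun p _ => ?_
    simp only [Perm.mul_apply, hmemQ, apply_mem_iff_of_supp hv]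
    refine and_congr_right fun _ => and_congr_right fun _ => and_congr_right fun _ =>
      and_congr_right fun h => apply_lt_apply_iff_of_supp hI hv ?_
    tauto
  rw [hsplit (v * w), hsplit w, houter]
  omega

end Support

section Adjacent

variable {a b : Fin n}

lemma inversionsOn_Icc_of_succ (hab : (b : ℕ) = a + 1) (w : Perm (Fin n)) :
    inversionsOn (Set.Icc a b) w = if w⁻¹ b < w⁻¹ a then 1 else 0 := by
  calc inversionsOn (Set.Icc a b) w
      = (({(w⁻¹ b, w⁻¹ a)} : Finset _).filter fun p => p.1 < p.2).card := by
        unfold inversionsOn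
        congr 1
        ext ⟨i, j⟩
        simp only [mem_filter, mem_univ, true_and, mem_singleton, Prod.mk.injEq, Set.mem_Icc,
          Perm.eq_inv_iff_eq, Fin.le_def, Fin.lt_def, Fin.ext_iff, hab]
        omega
    _ = _ := by rw [filter_singleton]; split_ifs <;> rfl

lemma inversionsOn_swap_mul_of_lt (hab : (b : ℕ) = a + 1) {Q : Set (Fin n)} (ha : a ∈ Q)
    (hb : b ∈ Q) {w : Perm (Fin n)} (h : w⁻¹ a < w⁻¹ b) :
    inversionsOn Q (swap a b * w) = inversionsOn Q w + 1 := by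
  have hIcc : ∀ x, x ∈ Set.Icc a b → x = a ∨ x = b := fun x hx => by
    simp only [Set.mem_Icc, Fin.le_def, Fin.ext_iff] at hx ⊢
    omega
  have hle : a ≤ b := Fin.le_def.2 (by omega)
  have hadd := inversionsOn_mul_add Set.ordConnected_Icc
    (fun x hx => (hIcc x hx).elim (· ▸ ha) (· ▸ hb))
    (mem_of_swap_apply_ne_self (Set.left_mem_Icc.2 hle) (Set.right_mem_Icc.2 hle)) w
  rw [inversionsOn_Icc_of_succ hab, inversionsOn_Icc_of_succ hab, if_neg (lt_asymm h),
    if_pos (by simpa using h)] at hadd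
  omega

lemma inversionsOn_swap_mul_of_gt (hab : (b : ℕ) = a + 1) {Q : Set (Fin n)} (ha : a ∈ Q)
    (hb : b ∈ Q) {w : Perm (Fin n)} (h : w⁻¹ b < w⁻¹ a) :
    inversionsOn Q w = inversionsOn Q (swap a b * w) + 1 := by
  simpa [swap_mul_self_mul] using
    inversionsOn_swap_mul_of_lt hab ha hb (w := swap a b * w) (by simpa using h)

lemma len_swap_mul_of_lt (hab : (b : ℕ) = a + 1) {w : Perm (Fin n)} (h : w⁻¹ a < w⁻¹ b) :
    len (swap a b * w) = len w + 1 := by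
  simpa only [len_eq_inversionsOn_univ] using
    inversionsOn_swap_mul_of_lt hab (Set.mem_univ a) (Set.mem_univ b) h

lemma len_swap_mul_of_gt (hab : (b : ℕ) = a + 1) {w : Perm (Fin n)} (h : w⁻¹ b < w⁻¹ a) :
    len w = len (swap a b * w) + 1 := by
  simpa only [len_eq_inversionsOn_univ] using
    inversionsOn_swap_mul_of_gt hab (Set.mem_univ a) (Set.mem_univ b) h

lemma len_swap (hab : (b : ℕ) = a + 1) : len (swap a b) = 1 := by
  simpa [len_eq_zero_iff.2 rfl] using
    len_swap_mul_of_lt (w := 1) hab (by simp [Fin.lt_def, hab])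

lemma len_mul_swap_of_lt (hab : (b : ℕ) = a + 1) {w : Perm (Fin n)} (h : w a < w b) :
    len (w * swap a b) = len w + 1 := by
  rw [← len_inv, mul_inv_rev, swap_inv, len_swap_mul_of_lt hab (by simpa using h), len_inv]

end Adjacent

lemma exists_descent_of_inversionsOn_ne_zero {Q : Set (Fin n)} (hQ : Q.OrdConnected)
    {w : Perm (Fin n)} (h : inversionsOn Q w ≠ 0) :
    ∃ a b : Fin n, (b : ℕ) = a + 1 ∧ a ∈ Q ∧ b ∈ Q ∧ w⁻¹ b < w⁻¹ a := by
  obtain ⟨⟨i, j⟩, hp⟩ := card_ne_zero.1 h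
  simp only [mem_filter, mem_univ, true_and] at hp
  obtain ⟨hij, hi, hj, hji⟩ := hp
  by_contra! hasc
  have hmono : ∀ d (x y : Fin n), x ∈ Q → y ∈ Q → (y : ℕ) = x + d →
      w⁻¹ x ≤ w⁻¹ y := by
    intro d
    induction d with
    | zero => exact fun x y _ _ hxy => by rw [show y = x from Fin.ext hxy]
    | succ d ih =>
      intro x y hx hy hxy
      have hz : (⟨x + d, by omega⟩ : Fin n) ∈ Q :=
        hQ.out hx hy ⟨Fin.le_def.2 (by simp), Fin.le_def.2 (by simp; omega)⟩
      exact (ih x _ hx hz rfl).trans (hasc _ y (by simp; omega) hz hy)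
  have := hmono _ (w j) (w i) hj hi (Nat.add_sub_of_le (Fin.le_def.1 hji.le)).symm
  simp only [Perm.coe_inv, symm_apply_apply] at this
  exact absurd hij (not_lt.2 this)

lemma inversionsOn_one (Q : Set (Fin n)) : inversionsOn Q 1 = 0 := by
  rw [inversionsOn, card_eq_zero, filter_eq_empty_iff]
  exact fun _ _ h => lt_asymm h.1 h.2.2.2

lemma inversionsOn_mul_of_inversionsOn_eq_zero {I : Set (Fin n)} {v u : Perm (Fin n)}
    (hv : ∀ x, v x ∈ I ↔ x ∈ I) (hu : inversionsOn I u = 0) :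
    inversionsOn I (v * u) = inversionsOn I v := by
  have hmono : ∀ i j, i < j → u i ∈ I → u j ∈ I → u i < u j := fun i j hij hi hj => by
    by_contra! h
    have hmem : (i, j) ∈ (univ : Finset (Fin n × Fin n)).filter fun p =>
        p.1 < p.2 ∧ u p.1 ∈ I ∧ u p.2 ∈ I ∧ u p.2 < u p.1 :=
      mem_filter.2 ⟨mem_univ _, hij, hi, hj, h.lt_of_ne (u.injective.ne hij.ne')⟩
    rw [inversionsOn, card_eq_zero] at hu
    simp [hu] at hmem
  refine card_nbij' (fun p => (u p.1, u p.2)) (fun p => (u⁻¹ p.1, u⁻¹ p.2)) ?_ ?_ ?_ ?_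
  · rintro ⟨i, j⟩ hp
    simp only [mem_coe, mem_filter, mem_univ, true_and, Perm.mul_apply, hv] at hp ⊢
    exact ⟨hmono i j hp.1 hp.2.1 hp.2.2.1, hp.2.1, hp.2.2.1, hp.2.2.2⟩
  · rintro ⟨a, b⟩ hp
    rw [mem_coe, mem_filter] at hp ⊢
    simp only [mem_univ, true_and, Perm.mul_apply, Perm.coe_inv, apply_symm_apply] at hp ⊢
    refine ⟨?_, hp.2.1, hp.2.2.1, hp.2.2.2⟩
    by_contra! h
    have := hmono _ _ (h.lt_of_ne (u⁻¹.injective.ne hp.1.ne')) (by simpa [hv] using hp.2.2.1)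
      (by simpa [hv] using hp.2.1)
    simp only [apply_symm_apply] at this
    exact lt_asymm this hp.1
  · intro p _; simp
  · intro p _; simp

lemma len_mul_add_inversionsOn {J : Fin n × Fin n} {v : Perm (Fin n)} (hv : inSJ J v)
    (u : Perm (Fin n)) :
    len (v * u) + inversionsOn (Set.Icc J.1 J.2) u =
      len u + inversionsOn (Set.Icc J.1 J.2) (v * u) := by
  simpa only [len_eq_inversionsOn_univ] using
    inversionsOn_mul_add Set.ordConnected_Icc (Set.subset_univ _) hv u

lemma inversionsOn_eq_len {J : Fin n × Fin n} {v : Perm (Fin n)} (hv : inSJ J v) :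
    inversionsOn (Set.Icc J.1 J.2) v = len v := by
  simpa [inversionsOn_one, len_eq_zero_iff.2] using (len_mul_add_inversionsOn hv 1).symm

lemma len_mul_of_inversionsOn_eq_zero {J : Fin n × Fin n} {v u : Perm (Fin n)} (hv : inSJ J v)
    (hu : inversionsOn (Set.Icc J.1 J.2) u = 0) : len (v * u) = len v + len u := by
  have h := len_mul_add_inversionsOn hv u
  have hvJ := apply_mem_iff_of_supp (I := Set.Icc J.1 J.2) hv
  rw [inversionsOn_mul_of_inversionsOn_eq_zero hvJ hu, inversionsOn_eq_len hv, hu] at h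
  omega

def SJ (J : Fin n × Fin n) : Finset (Perm (Fin n)) := univ.filter (inSJ J)

lemma mem_SJ {J : Fin n × Fin n} {v : Perm (Fin n)} : v ∈ SJ J ↔ inSJ J v := by
  simp [SJ]

lemma inSJ_mul {J : Fin n × Fin n} {v w : Perm (Fin n)} (hv : inSJ J v) (hw : inSJ J w) :
    inSJ J (v * w) := fun i hi => by
  by_cases h : w i = i
  · exact hv i (by rwa [Perm.mul_apply, h] at hi)
  · exact hw i h

lemma inSJ_swap {J : Fin n × Fin n} {a b : Fin n} (ha : memJ J a) (hb : memJ J b) :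
    inSJ J (swap a b) :=
  mem_of_swap_apply_ne_self (I := Set.Icc J.1 J.2) ha hb

lemma sum_SJ_mul_swap {M : Type*} [AddCommMonoid M] {J : Fin n × Fin n} {a b : Fin n}
    (ha : memJ J a) (hb : memJ J b) (f : Perm (Fin n) → M) :
    ∑ v ∈ SJ J, f (v * swap a b) = ∑ v ∈ SJ J, f v := by
  refine sum_equiv (Equiv.mulRight (swap a b)) (fun v => ?_) (fun _ _ => rfl)
  simp only [mem_SJ, Equiv.coe_mulRight]
  exact ⟨fun h => inSJ_mul h (inSJ_swap ha hb),
    fun h => by simpa [mul_swap_mul_self] using inSJ_mul h (inSJ_swap ha hb)⟩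

end Permutations

section Hecke

variable {n : ℕ}

lemma CJ_eq_sum_SJ {H : Type*} [Ring H] [Algebra R2 H] (T : Perm (Fin n) → H)
    (J : Fin n × Fin n) : CJ T J = ∑ v ∈ SJ J, T v :=
  rfl

namespace HeckeOK

variable {H : Type*} [Ring H] [Algebra R2 H] {T : Perm (Fin n) → H}

lemma T_mul_T_swap (hT : HeckeOK T) {a b : Fin n} (hab : (b : ℕ) = a + 1) (w : Perm (Fin n)) :
    T w * T (swap a b) = if len w < len (swap a b * w) then T (swap a b * w)
      else qq • T (swap a b * w) + (qq - 1) • T w := by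
  have hs : swp a (by omega) = swap a b := by
    rw [swp, show (⟨(a : ℕ) + 1, _⟩ : Fin n) = b from Fin.ext hab.symm]
  simpa only [hs] using hT.2 w a (by omega)

lemma T_mul_T_swap_of_len_lt (hT : HeckeOK T) {a b : Fin n} (hab : (b : ℕ) = a + 1)
    {w : Perm (Fin n)} (h : len w < len (swap a b * w)) :
    T w * T (swap a b) = T (swap a b * w) := by
  rw [hT.T_mul_T_swap hab, if_pos h]

lemma T_swap_mul_T_swap (hT : HeckeOK T) {a b : Fin n} (hab : (b : ℕ) = a + 1) :
    T (swap a b) * T (swap a b) = qq • 1 + (qq - 1) • T (swap a b) := by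
  rw [hT.T_mul_T_swap hab, swap_mul_self, if_neg (by simp [len_eq_zero_iff.2]), hT.1]

lemma T_mul_T (hT : HeckeOK T) {u v : Perm (Fin n)} (h : len (v * u) = len v + len u) :
    T u * T v = T (v * u) := by
  induction hN : len v generalizing v with
  | zero => rw [len_eq_zero_iff.1 hN, hT.1, mul_one, one_mul]
  | succ N ih =>
    obtain ⟨a, b, hab, -, -, hdesc⟩ := exists_descent_of_inversionsOn_ne_zero
      Set.ordConnected_univ (by rw [← len_eq_inversionsOn_univ, hN]; exact N.succ_ne_zero)
    have hv : swap a b * (swap a b * v) = v := swap_mul_self_mul a b v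
    have hlen := len_swap_mul_of_gt hab hdesc
    have hv'u : len (swap a b * v * u) = len (swap a b * v) + len u := by
      have h1 := len_mul_le (swap a b * v) u
      have h2 := len_mul_le (swap a b) (swap a b * v * u)
      rw [← mul_assoc, ← mul_assoc, swap_mul_self, one_mul, len_swap hab] at h2
      omega
    calc T u * T v = T u * T (swap a b * v) * T (swap a b) := by
          rw [mul_assoc, hT.T_mul_T_swap_of_len_lt hab (by rw [hv]; omega), hv]
      _ = T (swap a b * (swap a b * v * u)) := by
          rw [ih hv'u (by omega), hT.T_mul_T_swap_of_len_lt hab]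
          rw [← mul_assoc, ← mul_assoc, swap_mul_self, one_mul, h]
          omega
      _ = T (v * u) := by rw [← mul_assoc, hv]

lemma T_swap_mul_CJ (hT : HeckeOK T) {J : Fin n × Fin n} {a b : Fin n} (hab : (b : ℕ) = a + 1)
    (ha : memJ J a) (hb : memJ J b) : T (swap a b) * CJ T J = qq • CJ T J := by
  have hab' : a ≠ b := fun h => by simp [h] at hab
  set A := (SJ J).filter fun v => v a < v b
  have hfactor : CJ T J = (1 + T (swap a b)) * ∑ v ∈ A, T v := by
    rw [add_mul, one_mul, mul_sum]
    have hasc : ∀ v ∈ A, T (swap a b) * T v = T (v * swap a b) :=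
      fun v hv => hT.T_mul_T (by rw [len_mul_swap_of_lt hab (mem_filter.1 hv).2, len_swap hab])
    rw [sum_congr rfl hasc, CJ_eq_sum_SJ,
      ← sum_filter_add_sum_filter_not (SJ J) (fun v => v a < v b)]
    refine congrArg _ (sum_equiv (Equiv.mulRight (swap a b)) (fun v => ?_) (fun _ _ => rfl)).symm
    simp only [A, mem_filter, mem_SJ, Equiv.coe_mulRight, Perm.mul_apply, swap_apply_left,
      swap_apply_right, not_lt]
    refine and_congr ⟨fun h => inSJ_mul h (inSJ_swap ha hb),
      fun h => by simpa [mul_swap_mul_self] using inSJ_mul h (inSJ_swap ha hb)⟩ ?_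
    exact ⟨le_of_lt, fun h => h.lt_of_ne (v.injective.ne hab')⟩
  have hquad : T (swap a b) * (1 + T (swap a b)) = qq • (1 + T (swap a b)) := by
    rw [mul_add, mul_one, hT.T_swap_mul_T_swap hab]
    module
  rw [hfactor, ← mul_assoc, hquad, smul_mul_assoc]

lemma T_mul_CJ (hT : HeckeOK T) (J : Fin n × Fin n) (u : Perm (Fin n)) :
    T u * CJ T J = qq ^ inversionsOn (Set.Icc J.1 J.2) u • ∑ v ∈ SJ J, T (v * u) := by
  induction hN : inversionsOn (Set.Icc J.1 J.2) u generalizing u with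
  | zero =>
    rw [pow_zero, one_smul, CJ_eq_sum_SJ, mul_sum]
    exact sum_congr rfl fun v hv =>
      hT.T_mul_T (len_mul_of_inversionsOn_eq_zero (mem_SJ.1 hv) hN)
  | succ N ih =>
    obtain ⟨a, b, hab, ha, hb, hdesc⟩ := exists_descent_of_inversionsOn_ne_zero
      Set.ordConnected_Icc (by rw [hN]; exact N.succ_ne_zero)
    have hinv := inversionsOn_swap_mul_of_gt hab ha hb hdesc
    have hTu : T (swap a b * u) * T (swap a b) = T u := by
      have hlen := len_swap_mul_of_gt hab hdesc
      rw [hT.T_mul_T_swap_of_len_lt hab (by rw [swap_mul_self_mul]; omega), swap_mul_self_mul]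
    calc T u * CJ T J = T (swap a b * u) * (T (swap a b) * CJ T J) := by rw [← mul_assoc, hTu]
      _ = qq • qq ^ N • ∑ v ∈ SJ J, T (v * (swap a b * u)) := by
          rw [hT.T_swap_mul_CJ hab ha hb, mul_smul_comm, ih _ (by omega)]
      _ = qq ^ (N + 1) • ∑ v ∈ SJ J, T (v * u) := by
          rw [smul_smul, ← pow_succ', ← sum_SJ_mul_swap ha hb]
          simp only [mul_assoc, swap_mul_self_mul]

end HeckeOK

end Hecke

section PathFamilies

variable {n m : ℕ}

def pathFamilies (Js : Fin m → Fin n × Fin n) : Finset (Fin m → Perm (Fin n)) :=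
  Fintype.piFinset fun p => SJ (Js p)

lemma mem_pathFamilies {Js : Fin m → Fin n × Fin n} {vs : Fin m → Perm (Fin n)} :
    vs ∈ pathFamilies Js ↔ IsPathFamily Js vs := by
  simp [pathFamilies, IsPathFamily, mem_SJ]

lemma sum_pathFamilies_snoc {M : Type*} [AddCommMonoid M] (Js : Fin (m + 1) → Fin n × Fin n)
    (f : (Fin (m + 1) → Perm (Fin n)) → M) :
    ∑ vs ∈ pathFamilies Js, f vs =
      ∑ vs ∈ pathFamilies (Fin.init Js), ∑ v ∈ SJ (Js (Fin.last m)), f (Fin.snoc vs v) := by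
  have h := filter_piFinset_eq_map_snocEquiv (fun p => SJ (Js p)) (fun _ => True)
  rw [filter_true, filter_true] at h
  rw [pathFamilies, h, sum_map, sum_product_right]
  rfl

lemma List.ofFn_snoc {α : Type*} (vs : Fin m → α) (v : α) :
    List.ofFn (Fin.snoc vs v : Fin (m + 1) → α) = List.ofFn vs ++ [v] := by
  rw [List.ofFn_succ']
  simp

lemma posAt_snoc (vs : Fin m → Perm (Fin n)) (v : Perm (Fin n)) {k : ℕ} (hk : k ≤ m) :
    posAt (Fin.snoc vs v : Fin (m + 1) → Perm (Fin n)) k = posAt vs k := by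
  rw [posAt, posAt, List.ofFn_snoc, List.take_append_of_le_length (by simpa using hk)]

lemma typeOf_snoc (vs : Fin m → Perm (Fin n)) (v : Perm (Fin n)) :
    typeOf (Fin.snoc vs v : Fin (m + 1) → Perm (Fin n)) = v * typeOf vs := by
  rw [typeOf, typeOf, posAt, posAt, List.ofFn_snoc, List.take_of_length_le (by simp),
    List.take_of_length_le (by simp)]
  simp

lemma posAt_succ (vs : Fin m → Perm (Fin n)) (p : Fin m) :
    posAt vs (p + 1) = vs p * posAt vs p := by
  simp [posAt, List.take_add_one]

lemma Cprod_snoc {H : Type*} [Ring H] [Algebra R2 H] (T : Perm (Fin n) → H)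
    (Js : Fin (m + 1) → Fin n × Fin n) :
    Cprod T Js = Cprod T (Fin.init Js) * CJ T (Js (Fin.last m)) := by
  rw [Cprod, List.ofFn_succ', List.prod_concat]
  rfl

def heckeExponent (Js : Fin m → Fin n × Fin n) (vs : Fin m → Perm (Fin n)) : ℕ :=
  ∑ p, inversionsOn (Set.Icc (Js p).1 (Js p).2) (posAt vs p)

lemma heckeExponent_snoc (Js : Fin (m + 1) → Fin n × Fin n) (vs : Fin m → Perm (Fin n))
    (v : Perm (Fin n)) :
    heckeExponent Js (Fin.snoc vs v) = heckeExponent (Fin.init Js) vs +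
      inversionsOn (Set.Icc (Js (Fin.last m)).1 (Js (Fin.last m)).2) (typeOf vs) := by
  rw [heckeExponent, Fin.sum_univ_castSucc]
  congr 1
  · exact sum_congr rfl fun p _ => by rw [Fin.val_castSucc, posAt_snoc vs v p.2.le]; rfl
  · rw [Fin.val_last, posAt_snoc vs v le_rfl]
    rfl

theorem HeckeOK.Cprod_eq_sum {H : Type*} [Ring H] [Algebra R2 H] {T : Perm (Fin n) → H}
    (hT : HeckeOK T) (Js : Fin m → Fin n × Fin n) :
    Cprod T Js = ∑ vs ∈ pathFamilies Js, qq ^ heckeExponent Js vs • T (typeOf vs) := by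
  induction m with
  | zero =>
    simp [Cprod, pathFamilies, heckeExponent, typeOf, posAt, hT.1]
  | succ m ih =>
    rw [Cprod_snoc, ih, sum_mul, sum_pathFamilies_snoc]
    refine sum_congr rfl fun vs _ => ?_
    rw [smul_mul_assoc, hT.T_mul_CJ, smul_smul, ← pow_add, smul_sum]
    refine sum_congr rfl fun v _ => ?_
    rw [heckeExponent_snoc, typeOf_snoc]

lemma wordInv_eq_sum {Js : Fin m → Fin n × Fin n} {vs : Fin m → Perm (Fin n)}
    (hvs : IsPathFamily Js vs) :
    wordInv Js vs = ∑ p, (inversionsOn (Set.Icc (Js p).1 (Js p).2) (posAt vs p) +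
      inversionsOn (Set.Icc (Js p).1 (Js p).2) (posAt vs (p + 1))) := by
  rw [wordInv, card_filter, Fintype.sum_prod_type, sum_comm, Fintype.sum_prod_type]
  refine sum_congr rfl fun p _ => ?_
  rw [Fin.sum_univ_two, inversionsOn, inversionsOn, card_filter, card_filter]
  set J := Js p
  have key : ∀ x y x' y' : Fin n, (memJ J x' ↔ memJ J x) → (memJ J y' ↔ memJ J y) →
      (J.1 < J.2 ∧ memJ J x ∧ J.1 < J.2 ∧ memJ J y ∧ y' < x' ↔
        x' ∈ Set.Icc J.1 J.2 ∧ y' ∈ Set.Icc J.1 J.2 ∧ y' < x') := fun x y x' y' hx hy => by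
    rw [← hx, ← hy]
    exact ⟨fun h => ⟨h.2.1, h.2.2.2.1, h.2.2.2.2⟩, fun h =>
      have hJ : J.1 < J.2 := h.2.1.1.trans_lt (h.2.2.trans_le h.1.2)
      ⟨hJ, h.1, hJ, h.2.1, h.2.2⟩⟩
  have hmem : ∀ x, memJ J (posAt vs (p + 1) x) ↔ memJ J (posAt vs p x) := fun x => by
    rw [posAt_succ, Perm.mul_apply]
    exact apply_mem_iff_of_supp (I := Set.Icc J.1 J.2) (hvs p) _
  congr 1 <;> refine sum_congr rfl fun pr _ => ?_ <;> congr 1 <;> apply propext <;>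
    simp only [meetAt, centeredAt, Fin.isValue, true_and, false_and, or_false, false_or,
      zero_ne_one, one_ne_zero, and_assoc] <;> refine and_congr_right fun _ => ?_
  · exact key _ _ _ _ Iff.rfl Iff.rfl
  · exact key _ _ _ _ (hmem _) (hmem _)

lemma wordInv_eq_len_add {Js : Fin m → Fin n × Fin n} {vs : Fin m → Perm (Fin n)}
    (hvs : IsPathFamily Js vs) :
    wordInv Js vs = len (typeOf vs) + 2 * heckeExponent Js vs := by
  have hstep : ∀ p : Fin m,
      inversionsOn (Set.Icc (Js p).1 (Js p).2) (posAt vs (p + 1)) + len (posAt vs p) =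
        inversionsOn (Set.Icc (Js p).1 (Js p).2) (posAt vs p) + len (posAt vs (p + 1)) :=
    fun p => by
      have := len_mul_add_inversionsOn (hvs p) (posAt vs p)
      rw [posAt_succ]
      omega
  have htelescope : ∑ p : Fin m, len (posAt vs (p + 1)) =
      ∑ p : Fin m, len (posAt vs p) + len (typeOf vs) := by
    have := sum_range_succ' (fun k => len (posAt vs k)) m
    rw [sum_range_succ, show posAt vs 0 = 1 from rfl, len_eq_zero_iff.2 rfl, add_zero] at this
    rw [Fin.sum_univ_eq_sum_range (fun k => len (posAt vs k)),
      Fin.sum_univ_eq_sum_range (fun k => len (posAt vs (k + 1)))]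
    exact this.symm
  have hsum := sum_congr rfl fun p (_ : p ∈ univ) => hstep p
  rw [sum_add_distrib, sum_add_distrib] at hsum
  rw [wordInv_eq_sum hvs, heckeExponent, sum_add_distrib]
  omega

end PathFamilies

lemma Module.Basis.repr_sum_smul_apply {ι κ R M : Type*} [Semiring R] [AddCommMonoid M]
    [Module R M] (b : Module.Basis ι R M) (s : Finset κ) (c : κ → R) (f : κ → ι) (i : ι) :
    b.repr (∑ x ∈ s, c x • b (f x)) i = ∑ x ∈ s with f x = i, c x := by
  simp [Finsupp.single_apply, sum_filter]

lemma qq_pow (k : ℕ) : qq ^ k = Qp (2 * k) := by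
  rw [qq, Qp, LaurentPolynomial.T_pow, mul_comm]

lemma Qp_add (a b : ℤ) : Qp a * Qp b = Qp (a + b) :=
  (LaurentPolynomial.T_add a b).symm

theorem kl_product_coefficient_sigma_general
    {n m : ℕ} (Js : Fin m → Fin n × Fin n)
    {H : Type*} [Ring H] [Algebra R2 H]
    (T : Module.Basis (Perm (Fin n)) R2 H) (hT : HeckeOK ⇑T)
    (w : Perm (Fin n)) :
    T.repr (Cprod (⇑T) Js) w = Qp (-(len w : ℤ)) * zGcoeff Js w := by
  rw [hT.Cprod_eq_sum, T.repr_sum_smul_apply, zGcoeff, mul_sum]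
  refine sum_congr (by ext; simp [mem_pathFamilies]) fun vs hvs => ?_
  obtain ⟨hpath, rfl⟩ := (mem_filter.1 hvs).2
  rw [wordInv_eq_len_add hpath, Qp_add, qq_pow]
  congr 1
  push_cast
  ring

/-- Proposition 4.1 / `p:qewcoeff`.  For intervals
`J_1, …, J_m ⊆ [n]` and the star network `G = G_{J_1} ∘ ⋯ ∘ G_{J_m}` with
weighted path matrix `B`, the coefficient of `T_w` in the natural-basis
expansion of `C̃_{s_{J_1}}(q) ⋯ C̃_{s_{J_m}}(q)` equals
`q^{-ℓ(w)/2} σ_B(x^{e,w})`, where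
`σ_B(x^{e,w}) = [z_G] b_{1,w_1} ⋯ b_{n,w_n}`. -/
theorem kl_product_coefficient_sigma
    {n m : ℕ} (Js : Fin m → Fin n × Fin n) (hJs : ∀ p, (Js p).1 ≤ (Js p).2)
    {H : Type*} [Ring H] [Algebra R2 H]
    (T : Module.Basis (Perm (Fin n)) R2 H) (hT : HeckeOK ⇑T)
    (w : Perm (Fin n)) :
    T.repr (Cprod (⇑T) Js) w = Qp (-(len w : ℤ)) * zGcoeff Js w :=
  kl_product_coefficient_sigma_general Js T hT w

end
end

section
/- Let the simple star network G_J (J an interval of [n]) have weighted path matrix C, and let u, w ∈ S_n have the unique factorizations u = u_-u^*, w = w_-w^* with u_-, w_- minimum-length left coset representatives of uS_J, wS_J and u^*, w^* ∈ S_J. Then σ_C(x^{u,w}) = q^{(ℓ(u^*)+ℓ(w^*))/2} if u^{-1}w ∈ S_J, and σ_C(x^{u,w}) = 0 otherwise. -/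
/- Common combinatorial setup: star networks, covering path families,
   crossing/noncrossing statistics, and the base ring ℤ[q^{1/2},q^{-1/2}]. -/

open Equiv Finset
open scoped Classical

/- The quantum matrix bialgebra `A_n(q)`, presented as the quotient of the
free `R2`-algebra on the generators `x_{i,j}` by the defining relations. -/

noncomputable section
open Equiv Finset
open scoped Classical

/-- The defining relations of the quantum matrix bialgebra: for `i < j` and
`k < l`,
`x_{i,l} x_{i,k} = q^{1/2} x_{i,k} x_{i,l}`,
`x_{j,k} x_{i,k} = q^{1/2} x_{i,k} x_{j,k}`,
`x_{j,k} x_{i,l} = x_{i,l} x_{j,k}`, and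
`x_{j,l} x_{i,k} = x_{i,k} x_{j,l} + (q^{1/2} - q^{-1/2}) x_{i,l} x_{j,k}`. -/
inductive qmbRel (n : ℕ) :
    FreeAlgebra R2 (Fin n × Fin n) → FreeAlgebra R2 (Fin n × Fin n) → Prop
  | row {i k l : Fin n} (h : k < l) :
      qmbRel n (FreeAlgebra.ι R2 (i, l) * FreeAlgebra.ι R2 (i, k))
        (Qp 1 • (FreeAlgebra.ι R2 (i, k) * FreeAlgebra.ι R2 (i, l)))
  | col {i j k : Fin n} (h : i < j) :
      qmbRel n (FreeAlgebra.ι R2 (j, k) * FreeAlgebra.ι R2 (i, k))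
        (Qp 1 • (FreeAlgebra.ι R2 (i, k) * FreeAlgebra.ι R2 (j, k)))
  | comm {i j k l : Fin n} (hij : i < j) (hkl : k < l) :
      qmbRel n (FreeAlgebra.ι R2 (j, k) * FreeAlgebra.ι R2 (i, l))
        (FreeAlgebra.ι R2 (i, l) * FreeAlgebra.ι R2 (j, k))
  | quasi {i j k l : Fin n} (hij : i < j) (hkl : k < l) :
      qmbRel n (FreeAlgebra.ι R2 (j, l) * FreeAlgebra.ι R2 (i, k))
        (FreeAlgebra.ι R2 (i, k) * FreeAlgebra.ι R2 (j, l) +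
          (Qp 1 - Qp (-1)) • (FreeAlgebra.ι R2 (i, l) * FreeAlgebra.ι R2 (j, k)))

/-- The quantum matrix bialgebra `A_n(q)` (as an `R2`-algebra). -/
abbrev Aq (n : ℕ) : Type := RingQuot (qmbRel n)

/-- The generator `x_{i,j}` of `A_n(q)`. -/
def xv {n : ℕ} (ij : Fin n × Fin n) : Aq n :=
  RingQuot.mkAlgHom R2 (qmbRel n) (FreeAlgebra.ι R2 ij)

/-- The monomial `x^{u,w} = x_{u_1,w_1} x_{u_2,w_2} ⋯ x_{u_n,w_n} ∈ A_n(q)`. -/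
def xmon {n : ℕ} (u w : Perm (Fin n)) : Aq n :=
  (List.ofFn fun k : Fin n => xv (u k, w k)).prod

end
noncomputable section
open Equiv Finset
open scoped Classical

/-- `w` is the minimum-length representative of its coset (the paper's left
coset `wS_J`): no inversion of `w` has both values in the interval `J`. -/
def isMinLC {n : ℕ} (J : Fin n × Fin n) (w : Perm (Fin n)) : Prop :=
  ∀ i j : Fin n, i < j → memJ J (w i) → memJ J (w j) → w i < w j

/-! The functional `σ_C` is first defined on the free algebra. On a word
`x_{i₁,k₁} ⋯ x_{i_N,k_N}` it is `[z_G] c_{i₁,k₁} ⋯ c_{i_N,k_N}`, which is explicit: it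
vanishes unless the letters are paths of `G_J` using every edge at the centre exactly once,
and is then `q^{1/2}` to the number of inversions among the entering and among the leaving
variables. This functional kills the four defining relations of `A_n(q)` (the last one
because `q^{(m+2)/2} = q^{m/2} + (q^{1/2} - q^{-1/2}) q^{(m+1)/2}`), so it can be evaluated
on `x^{u,w}` itself instead of on its expansion in the basis `x^{e,v}`. The word of `x^{u,w}`
is covering iff `w u⁻¹ ∈ S_J`, and its inversions are those of `u` and of `w` with values in
`J`; for `u = u^* u_-` the minimality of `u_-` turns these into the inversions of `u^*`. -/

theorem RingQuot.ringConGen_rel_of_mkRingHom_eq {R : Type*} [Semiring R] {r : R → R → Prop}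
    {a b : R} (h : RingQuot.mkRingHom r a = RingQuot.mkRingHom r b) : RingConGen.Rel r a b := by
  rw [← RingQuot.eqvGen_rel_eq]
  apply Quot.eqvGen_exact
  simpa [RingQuot.mkRingHom_def] using congrArg RingQuot.toQuot h

theorem RingQuot.apply_eq_of_mkRingHom_eq {R M : Type*} [Semiring R] [AddCommMonoid M]
    {r : R → R → Prop} (f : R →+ M)
    (hf : ∀ ⦃a b⦄, r a b → ∀ x y, f (x * a * y) = f (x * b * y)) {a b : R}
    (h : RingQuot.mkRingHom r a = RingQuot.mkRingHom r b) : f a = f b := by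
  suffices key : ∀ {a b}, RingConGen.Rel r a b → ∀ x y, f (x * a * y) = f (x * b * y) by
    simpa using key (RingQuot.ringConGen_rel_of_mkRingHom_eq h) 1 1
  intro a b hab
  induction hab with
  | of a b h => exact hf h
  | refl => exact fun _ _ => rfl
  | symm _ ih => exact fun x y => (ih x y).symm
  | trans _ _ ih₁ ih₂ => exact fun x y => (ih₁ x y).trans (ih₂ x y)
  | add _ _ ih₁ ih₂ => intro x y; simp only [mul_add, add_mul, map_add, ih₁, ih₂]
  | @mul a b c d _ _ ih₁ ih₂ =>
    intro x y
    calc f (x * (a * c) * y) = f (x * a * (c * y)) := by simp only [mul_assoc]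
      _ = f (x * b * (c * y)) := ih₁ x (c * y)
      _ = f (x * b * c * y) := by simp only [mul_assoc]
      _ = f (x * b * d * y) := ih₂ (x * b) y
      _ = f (x * (b * d) * y) := by simp only [mul_assoc]

theorem FreeAlgebra.basisFreeMonoid_apply (R : Type*) [CommSemiring R] {X : Type*}
    (w : FreeMonoid X) :
    FreeAlgebra.basisFreeMonoid R X w = FreeMonoid.lift (FreeAlgebra.ι R) w := by
  simp [FreeAlgebra.basisFreeMonoid, FreeAlgebra.equivMonoidAlgebraFreeMonoid]

theorem FreeAlgebra.apply_mul_mul_eq_of_freeMonoid {R X M : Type*} [CommSemiring R]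
    [AddCommMonoid M] [Module R M] (f : FreeAlgebra R X →ₗ[R] M) {a b : FreeAlgebra R X}
    (h : ∀ u v : FreeMonoid X, f (FreeMonoid.lift (ι R) u * a * FreeMonoid.lift (ι R) v) =
      f (FreeMonoid.lift (ι R) u * b * FreeMonoid.lift (ι R) v))
    (x y : FreeAlgebra R X) : f (x * a * y) = f (x * b * y) := by
  let sandwich (c : FreeAlgebra R X) :=
    ((LinearMap.mul R _).comp (LinearMap.mulRight R c)).compr₂ f
  have := LinearMap.ext_basis (basisFreeMonoid R X) (basisFreeMonoid R X)
    (B := sandwich a) (B' := sandwich b) (by simpa [sandwich, basisFreeMonoid_apply] using h)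
  simpa [sandwich] using LinearMap.congr_fun₂ this x y

theorem List.countP_ofFn {α : Type*} {N : ℕ} (f : Fin N → α) (p : α → Bool) :
    (List.ofFn f).countP p = #{i | p (f i)} := by
  induction N with
  | zero => simp
  | succ N ih =>
    rw [List.ofFn_succ, List.countP_cons, ih, Finset.card_filter, Finset.card_filter,
      Fin.sum_univ_succ]
    exact add_comm _ _

section SimpleStar

variable {n : ℕ} {J : Fin n × Fin n}

def IsStarLetter (J : Fin n × Fin n) (e : Fin n × Fin n) : Prop :=
  memJ J e.1 ∧ memJ J e.2 ∨ ¬ memJ J e.1 ∧ e.2 = e.1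

def CoversOnce (J : Fin n × Fin n) (l : List (Fin n)) : Prop :=
  ∀ h, memJ J h → l.count h = 1

def IsCoveringWord (J : Fin n × Fin n) (ℓ : List (Fin n × Fin n)) : Prop :=
  (∀ e ∈ ℓ, IsStarLetter J e) ∧
    CoversOnce J (ℓ.map Prod.fst) ∧ CoversOnce J (ℓ.map Prod.snd)

def inversionsIn (J : Fin n × Fin n) : List (Fin n) → ℕ
  | [] => 0
  | a :: l => l.countP (fun b => memJ J a ∧ memJ J b ∧ b < a) + inversionsIn J l

-- The letter `(i, k)` stands for `c_{i,k}`: the path from source `i` to sink `k`, either the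
-- horizontal edge (`i = k ∉ J`) or the path `z_{i,1,1} z_{k,1,2}` through the centre.
def sigmaWord (J : Fin n × Fin n) (ℓ : List (Fin n × Fin n)) : R2 :=
  if IsCoveringWord J ℓ then
    Qp (inversionsIn J (ℓ.map Prod.fst) + inversionsIn J (ℓ.map Prod.snd))
  else 0

theorem CoversOnce.of_perm {l l' : List (Fin n)} (hl : CoversOnce J l) (h : l.Perm l') :
    CoversOnce J l' :=
  fun x hx => h.count_eq x ▸ hl x hx

theorem IsCoveringWord.of_perm {ℓ ℓ' : List (Fin n × Fin n)} (hℓ : IsCoveringWord J ℓ)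
    (h : ℓ.Perm ℓ') : IsCoveringWord J ℓ' :=
  ⟨fun e he => hℓ.1 e (h.mem_iff.mpr he), hℓ.2.1.of_perm (h.map _),
    hℓ.2.2.of_perm (h.map _)⟩

theorem isCoveringWord_swap {x y : List (Fin n × Fin n)} {a b : Fin n × Fin n} :
    IsCoveringWord J (x ++ a :: b :: y) ↔ IsCoveringWord J (x ++ b :: a :: y) :=
  ⟨fun h => h.of_perm (.append_left x (.swap b a y)),
    fun h => h.of_perm (.append_left x (.swap a b y))⟩

theorem inversionsIn_append_swap {x y : List (Fin n)} {a b : Fin n} (hab : a < b) :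
    inversionsIn J (x ++ b :: a :: y) =
      inversionsIn J (x ++ a :: b :: y) + if memJ J a ∧ memJ J b then 1 else 0 := by
  induction x with
  | nil =>
    simp [inversionsIn, List.countP_cons, hab, hab.not_gt, and_comm]
    omega
  | cons c x ih =>
    simp only [List.cons_append, inversionsIn, ih,
      (List.Perm.append_left x (.swap a b y)).countP_eq]
    omega

theorem IsStarLetter.memJ_iff {e : Fin n × Fin n} (he : IsStarLetter J e) :
    memJ J e.1 ↔ memJ J e.2 := by
  rcases he with ⟨h₁, h₂⟩ | ⟨-, h⟩
  · exact iff_of_true h₁ h₂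
  · rw [h]

theorem memJ_of_isStarLetter {i j k l : Fin n} (hij : i < j) (hkl : k < l)
    (hil : IsStarLetter J (i, l)) (hjk : IsStarLetter J (j, k)) :
    memJ J i ∧ memJ J j ∧ memJ J k ∧ memJ J l := by
  simp only [IsStarLetter, memJ, Fin.le_def, Fin.lt_def, Fin.ext_iff] at *
  omega

theorem IsCoveringWord.snd_eq_of_fst_eq {x y : List (Fin n × Fin n)} {a b : Fin n × Fin n}
    (hw : IsCoveringWord J (x ++ a :: b :: y)) (hab : a.1 = b.1) : a.2 = b.2 := by
  by_cases ha : memJ J a.1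
  · have := hw.2.1 a.1 ha
    simp [hab] at this
    omega
  · have ha' : a.2 = a.1 := ((hw.1 a (by simp)).resolve_left fun h => ha h.1).2
    have hb' : b.2 = b.1 := ((hw.1 b (by simp)).resolve_left fun h => ha (hab ▸ h.1)).2
    rw [ha', hb', hab]

theorem IsCoveringWord.fst_eq_of_snd_eq {x y : List (Fin n × Fin n)} {a b : Fin n × Fin n}
    (hw : IsCoveringWord J (x ++ a :: b :: y)) (hab : a.2 = b.2) : a.1 = b.1 := by
  by_cases ha : memJ J a.2
  · have := hw.2.2 a.2 ha
    simp [hab] at this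
    omega
  · have ha' : a.2 = a.1 := ((hw.1 a (by simp)).resolve_left fun h => ha h.2).2
    have hb' : b.2 = b.1 := ((hw.1 b (by simp)).resolve_left fun h => ha (hab ▸ h.2)).2
    rw [← ha', ← hb', hab]

theorem Qp_add_two (m : ℤ) : Qp (m + 2) = Qp m + (Qp 1 - Qp (-1)) * Qp (m + 1) := by
  simp only [Qp, sub_mul, ← LaurentPolynomial.T_add]
  ring_nf

theorem sigmaWord_of_fst_eq {x y : List (Fin n × Fin n)} {i k l : Fin n} (hkl : k ≠ l) :
    sigmaWord J (x ++ (i, k) :: (i, l) :: y) = 0 :=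
  if_neg fun hw => hkl (hw.snd_eq_of_fst_eq rfl)

theorem sigmaWord_of_snd_eq {x y : List (Fin n × Fin n)} {i j k : Fin n} (hij : i ≠ j) :
    sigmaWord J (x ++ (i, k) :: (j, k) :: y) = 0 :=
  if_neg fun hw => hij (hw.fst_eq_of_snd_eq rfl)

theorem sigmaWord_comm {x y : List (Fin n × Fin n)} {i j k l : Fin n} (hij : i < j)
    (hkl : k < l) :
    sigmaWord J (x ++ (j, k) :: (i, l) :: y) = sigmaWord J (x ++ (i, l) :: (j, k) :: y) := by
  unfold sigmaWord
  by_cases hw : IsCoveringWord J (x ++ (i, l) :: (j, k) :: y)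
  · rw [if_pos (isCoveringWord_swap.mpr hw), if_pos hw]
    have hil : memJ J i ↔ memJ J l := (hw.1 (i, l) (by simp)).memJ_iff
    have hjk : memJ J j ↔ memJ J k := (hw.1 (j, k) (by simp)).memJ_iff
    simp only [List.map_append, List.map_cons, inversionsIn_append_swap hij,
      inversionsIn_append_swap hkl, hil, hjk, and_comm]
    push_cast
    ring_nf
  · rw [if_neg (mt isCoveringWord_swap.mp hw), if_neg hw]

theorem isCoveringWord_exchange {x y : List (Fin n × Fin n)} {i j k l : Fin n}
    (hJ : memJ J i ∧ memJ J j ∧ memJ J k ∧ memJ J l) :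
    IsCoveringWord J (x ++ (i, l) :: (j, k) :: y) ↔
      IsCoveringWord J (x ++ (i, k) :: (j, l) :: y) := by
  have star {a b : Fin n} (ha : memJ J a) (hb : memJ J b) : IsStarLetter J (a, b) :=
    .inl ⟨ha, hb⟩
  simp only [IsCoveringWord, List.forall_mem_append, List.forall_mem_cons, List.map_append,
    List.map_cons, star hJ.1 hJ.2.2.2, star hJ.2.1 hJ.2.2.1, star hJ.1 hJ.2.2.1,
    star hJ.2.1 hJ.2.2.2, true_and]
  exact and_congr_right' (and_congr_right' ⟨fun h => h.of_perm (.append_left _ (.swap _ _ _)),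
    fun h => h.of_perm (.append_left _ (.swap _ _ _))⟩)

theorem sigmaWord_quasi {x y : List (Fin n × Fin n)} {i j k l : Fin n} (hij : i < j)
    (hkl : k < l) :
    sigmaWord J (x ++ (j, l) :: (i, k) :: y) =
      sigmaWord J (x ++ (i, k) :: (j, l) :: y) +
        (Qp 1 - Qp (-1)) * sigmaWord J (x ++ (i, l) :: (j, k) :: y) := by
  unfold sigmaWord
  rw [isCoveringWord_swap]
  simp only [List.map_append, List.map_cons, inversionsIn_append_swap hij,
    inversionsIn_append_swap hkl]
  by_cases hJ : memJ J i ∧ memJ J j ∧ memJ J k ∧ memJ J l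
  · simp only [isCoveringWord_exchange hJ, hJ, and_self, if_true]
    split_ifs
    · push_cast
      rw [add_add_add_comm, one_add_one_eq_two, ← add_assoc, Qp_add_two]
    · ring
  · have hw : ¬ IsCoveringWord J (x ++ (i, l) :: (j, k) :: y) := fun hw =>
      hJ (memJ_of_isStarLetter hij hkl (hw.1 _ (by simp)) (hw.1 _ (by simp)))
    rw [if_neg hw, mul_zero, add_zero]
    by_cases hw' : IsCoveringWord J (x ++ (i, k) :: (j, l) :: y)
    · have hil : memJ J i ↔ memJ J k := (hw'.1 (i, k) (by simp)).memJ_iff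
      have hjk : memJ J j ↔ memJ J l := (hw'.1 (j, l) (by simp)).memJ_iff
      have hij' : ¬ (memJ J i ∧ memJ J j) := by tauto
      have hkl' : ¬ (memJ J k ∧ memJ J l) := by tauto
      simp only [hw', hij', hkl', if_true, if_false, add_zero]
    · simp only [hw', if_false]

def sigmaFree (J : Fin n × Fin n) : FreeAlgebra R2 (Fin n × Fin n) →ₗ[R2] R2 :=
  (FreeAlgebra.basisFreeMonoid R2 _).constr R2 fun w => sigmaWord J w.toList

theorem sigmaFree_lift (w : FreeMonoid (Fin n × Fin n)) :
    sigmaFree J (FreeMonoid.lift (FreeAlgebra.ι R2) w) = sigmaWord J w.toList := by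
  rw [sigmaFree, ← FreeAlgebra.basisFreeMonoid_apply, Module.Basis.constr_basis]

theorem sigmaFree_prod_map_ι (ℓ : List (Fin n × Fin n)) :
    sigmaFree J (ℓ.map (FreeAlgebra.ι R2)).prod = sigmaWord J ℓ := by
  simpa using sigmaFree_lift (J := J) (.ofList ℓ)

theorem sigmaFree_lift_mul_mul_lift (u v : FreeMonoid (Fin n × Fin n))
    (e₁ e₂ : Fin n × Fin n) :
    sigmaFree J (FreeMonoid.lift (FreeAlgebra.ι R2) u *
        (FreeAlgebra.ι R2 e₁ * FreeAlgebra.ι R2 e₂) * FreeMonoid.lift (FreeAlgebra.ι R2) v) =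
      sigmaWord J (u.toList ++ e₁ :: e₂ :: v.toList) := by
  have hword : u.toList ++ e₁ :: e₂ :: v.toList = (u * .of e₁ * .of e₂ * v).toList := by
    simp
  rw [hword, ← sigmaFree_lift]
  simp [mul_assoc]

theorem sigmaFree_mul_mul_eq {a b : FreeAlgebra R2 (Fin n × Fin n)} (h : qmbRel n a b)
    (x y : FreeAlgebra R2 (Fin n × Fin n)) :
    sigmaFree J (x * a * y) = sigmaFree J (x * b * y) := by
  refine FreeAlgebra.apply_mul_mul_eq_of_freeMonoid _ (fun u v => ?_) x y
  cases h with
  | row h =>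
    simp only [mul_smul_comm, smul_mul_assoc, map_smul, sigmaFree_lift_mul_mul_lift,
      sigmaWord_of_fst_eq h.ne, sigmaWord_of_fst_eq h.ne', smul_zero]
  | col h =>
    simp only [mul_smul_comm, smul_mul_assoc, map_smul, sigmaFree_lift_mul_mul_lift,
      sigmaWord_of_snd_eq h.ne, sigmaWord_of_snd_eq h.ne', smul_zero]
  | comm hij hkl =>
    simp only [sigmaFree_lift_mul_mul_lift, sigmaWord_comm hij hkl]
  | quasi hij hkl =>
    simp only [mul_add, add_mul, mul_smul_comm, smul_mul_assoc, map_add, map_smul,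
      sigmaFree_lift_mul_mul_lift, sigmaWord_quasi hij hkl, smul_eq_mul]

theorem sigmaFree_eq_of_mk_eq {a b : FreeAlgebra R2 (Fin n × Fin n)}
    (h : RingQuot.mkAlgHom R2 (qmbRel n) a = RingQuot.mkAlgHom R2 (qmbRel n) b) :
    sigmaFree J a = sigmaFree J b :=
  RingQuot.apply_eq_of_mkRingHom_eq (sigmaFree J).toAddMonoidHom
    (fun _ _ h => sigmaFree_mul_mul_eq h) (by rw [← RingQuot.mkAlgHom_coe R2]; exact h)

theorem inversionsIn_ofFn {N : ℕ} (g : Fin N → Fin n) :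
    inversionsIn J (List.ofFn g) =
      #{p : Fin N × Fin N | p.1 < p.2 ∧ memJ J (g p.1) ∧ memJ J (g p.2) ∧
        g p.2 < g p.1} := by
  induction N with
  | zero => simp [inversionsIn]
  | succ N ih =>
    rw [List.ofFn_succ, inversionsIn, ih, List.countP_ofFn]
    simp only [Finset.card_filter, Fintype.sum_prod_type, Fin.sum_univ_succ]
    simp [Fin.succ_pos, Fin.succ_lt_succ_iff]

theorem memJ_apply_iff_of_inSJ {v : Perm (Fin n)} (hv : inSJ J v) {x : Fin n} :
    memJ J (v x) ↔ memJ J x := by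
  by_cases hx : v x = x
  · rw [hx]
  · exact iff_of_true (hv (v x) (mt (congrArg v.symm) (by simpa using hx))) (hv x hx)

theorem inSJ_iff_forall_isStarLetter {v : Perm (Fin n)} :
    inSJ J v ↔ ∀ x, IsStarLetter J (x, v x) := by
  refine ⟨fun hv x => ?_, fun h x hx => ((h x).resolve_right fun h' => hx h'.2).1⟩
  by_cases hx : memJ J x
  · exact .inl ⟨hx, (memJ_apply_iff_of_inSJ hv).mpr hx⟩
  · exact .inr ⟨hx, not_not.mp (mt (hv x) hx)⟩

theorem memJ_of_inversion_of_inSJ {v : Perm (Fin n)} (hv : inSJ J v) {s t : Fin n}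
    (hst : s < t) (hvst : v t < v s) : memJ J s ∧ memJ J t := by
  have hs := (inSJ_iff_forall_isStarLetter.mp hv) s
  have ht := (inSJ_iff_forall_isStarLetter.mp hv) t
  simp only [IsStarLetter, memJ, Fin.le_def, Fin.lt_def, Fin.ext_iff] at *
  omega

theorem lt_iff_of_isMinLC {π : Perm (Fin n)} (hπ : isMinLC J π) {s t : Fin n}
    (hs : memJ J (π s)) (ht : memJ J (π t)) : π s < π t ↔ s < t := by
  refine ⟨fun h => lt_of_not_ge fun hts => ?_, fun h => hπ s t h hs ht⟩
  rcases hts.lt_or_eq with hlt | rfl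
  · exact (hπ t s hlt ht hs).asymm h
  · exact h.false

theorem inversionsIn_ofFn_mul_of_isMinLC {v π : Perm (Fin n)} (hv : inSJ J v)
    (hπ : isMinLC J π) :
    inversionsIn J (List.ofFn ⇑(v * π)) = len v := by
  rw [inversionsIn_ofFn, len]
  refine Finset.card_nbij' (fun p => (π p.1, π p.2)) (fun p => (π⁻¹ p.1, π⁻¹ p.2))
    ?_ ?_ ?_ ?_
  · intro p hp
    simp only [Finset.mem_coe, Finset.mem_filter, Finset.mem_univ, true_and, Perm.mul_apply,
      memJ_apply_iff_of_inSJ hv] at hp ⊢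
    exact ⟨hπ _ _ hp.1 hp.2.1 hp.2.2.1, hp.2.2.2⟩
  · intro p hp
    simp only [Finset.mem_coe, Finset.mem_filter, Finset.mem_univ, true_and] at hp
    obtain ⟨hs, ht⟩ := memJ_of_inversion_of_inSJ hv hp.1 hp.2
    simp only [Finset.mem_coe, Finset.mem_filter, Finset.mem_univ, true_and, Perm.mul_apply,
      memJ_apply_iff_of_inSJ hv, Perm.coe_inv, Equiv.apply_symm_apply]
    exact ⟨(lt_iff_of_isMinLC hπ (by simpa) (by simpa)).mp (by simpa using hp.1), hs, ht, hp.2⟩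
  · intro p _; simp
  · intro p _; simp

theorem posAt_zero {m : ℕ} (vs : Fin m → Perm (Fin n)) : posAt vs 0 = 1 := by
  simp [posAt]

theorem posAt_one (vs : Fin 1 → Perm (Fin n)) : posAt vs 1 = vs 0 := by
  simp [posAt, List.ofFn_succ]

theorem wordInv_of_inSJ {vs : Fin 1 → Perm (Fin n)} (hv : inSJ J (vs 0)) :
    wordInv (fun _ : Fin 1 => J) vs = len (vs 0) := by
  rw [wordInv, len]
  refine Finset.card_nbij' Prod.fst (fun p => (p, 0, 1)) (fun x hx => ?_) (fun p hp => ?_)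
    (fun x hx => ?_) (fun p _ => rfl) <;>
  simp only [meetAt, centeredAt, Fin.val_eq_zero, posAt_zero, posAt_one, Perm.coe_one, id_eq,
    zero_add, coe_filter, mem_univ, true_and, Set.mem_ofPred_eq] at *
  · obtain ⟨hlt, -, ⟨-, hgt⟩ | ⟨-, hinv⟩⟩ := hx
    · exact absurd hlt hgt.not_gt
    · exact ⟨hlt, hinv⟩
  · obtain ⟨hs, ht⟩ := memJ_of_inversion_of_inSJ hv hp.1 hp.2
    have hJ : J.1 < J.2 := lt_of_le_of_lt hs.1 (lt_of_lt_of_le hp.1 ht.2)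
    exact ⟨hp.1, ⟨⟨hJ, hs⟩, hJ, ht⟩, .inr hp.2⟩
  · obtain ⟨hlt, -, ⟨-, hgt⟩ | ⟨h1, -⟩⟩ := hx
    · exact absurd hlt hgt.not_gt
    · exact Prod.ext rfl (Prod.ext (Subsingleton.elim _ _) h1.symm)

theorem inversionsIn_ofFn_of_inSJ {v : Perm (Fin n)} (hv : inSJ J v) :
    inversionsIn J (List.ofFn v) = len v :=
  inversionsIn_ofFn_mul_of_isMinLC (π := 1) hv fun _ _ h _ _ => h

theorem inversionsIn_ofFn_one : inversionsIn J (List.ofFn ⇑(1 : Perm (Fin n))) = 0 := by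
  rw [inversionsIn_ofFn_of_inSJ fun _ h => absurd rfl h, len, Finset.card_eq_zero,
    Finset.filter_eq_empty_iff]
  exact fun p _ h => h.1.not_gt h.2

def pairWord (u w : Perm (Fin n)) : List (Fin n × Fin n) := List.ofFn fun k => (u k, w k)

theorem coversOnce_ofFn (u : Perm (Fin n)) : CoversOnce J (List.ofFn u) := fun h _ =>
  List.count_eq_one_of_mem (List.nodup_ofFn.mpr u.injective)
    (List.mem_ofFn.mpr ⟨u⁻¹ h, by simp⟩)

theorem pairWord_map_fst (u w : Perm (Fin n)) : (pairWord u w).map Prod.fst = List.ofFn u := by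
  simp [pairWord, List.map_ofFn]; rfl

theorem pairWord_map_snd (u w : Perm (Fin n)) : (pairWord u w).map Prod.snd = List.ofFn w := by
  simp [pairWord, List.map_ofFn]; rfl

theorem isCoveringWord_pairWord {u w : Perm (Fin n)} :
    IsCoveringWord J (pairWord u w) ↔ inSJ J (w * u⁻¹) := by
  rw [IsCoveringWord, pairWord_map_fst, pairWord_map_snd, inSJ_iff_forall_isStarLetter]
  simp only [coversOnce_ofFn, and_true, pairWord, List.forall_mem_ofFn_iff]
  refine Iff.trans ?_ u.symm.forall_congr_left.symm
  simp

theorem sigmaWord_pairWord (u w : Perm (Fin n)) :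
    sigmaWord J (pairWord u w) =
      if inSJ J (w * u⁻¹) then
        Qp (inversionsIn J (List.ofFn u) + inversionsIn J (List.ofFn w))
      else 0 := by
  rw [sigmaWord, isCoveringWord_pairWord, pairWord_map_fst, pairWord_map_snd]

theorem zGcoeff_eq_sigmaWord (v : Perm (Fin n)) :
    zGcoeff (fun _ : Fin 1 => J) v = sigmaWord J (pairWord 1 v) := by
  rw [zGcoeff, Finset.sum_filter, ← (Equiv.funUnique (Fin 1) (Perm (Fin n))).symm.sum_comp,
    sigmaWord_pairWord, inv_one, mul_one, inversionsIn_ofFn_one]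
  simp only [IsPathFamily, typeOf, posAt_one, Equiv.funUnique_symm_apply, uniqueElim_const,
    forall_const, Nat.cast_zero, zero_add]
  rw [Fintype.sum_eq_single v fun x hx => if_neg fun h => hx h.2]
  simp only [and_true]
  split_ifs with hv
  · rw [wordInv_of_inSJ (by simpa using hv), inversionsIn_ofFn_of_inSJ hv]
    simp
  · rfl

theorem xmon_eq_mkAlgHom (u w : Perm (Fin n)) :
    xmon u w = RingQuot.mkAlgHom R2 (qmbRel n) ((pairWord u w).map (FreeAlgebra.ι R2)).prod := by
  rw [map_list_prod, List.map_map, pairWord, List.map_ofFn]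
  rfl

end SimpleStar

theorem sigma_simple_star_coset_general
    {n : ℕ} (J : Fin n × Fin n)
    (u w ustar wstar uminus wminus : Perm (Fin n))
    (hustar : inSJ J ustar) (hwstar : inSJ J wstar)
    (huminus : isMinLC J uminus) (hwminus : isMinLC J wminus)
    (hufac : u = ustar * uminus) (hwfac : w = wstar * wminus)
    (c : Perm (Fin n) → R2)
    (hc : xmon u w = ∑ v : Perm (Fin n), c v • xmon 1 v) :
    (inSJ J (w * u⁻¹) →
      ∑ v : Perm (Fin n), c v * zGcoeff (fun _ : Fin 1 => J) v =
        Qp ((len ustar + len wstar : ℕ) : ℤ)) ∧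
    (¬ inSJ J (w * u⁻¹) →
      ∑ v : Perm (Fin n), c v * zGcoeff (fun _ : Fin 1 => J) v = 0) := by
  have hmk : RingQuot.mkAlgHom R2 (qmbRel n) ((pairWord u w).map (FreeAlgebra.ι R2)).prod =
      RingQuot.mkAlgHom R2 (qmbRel n)
        (∑ v, c v • ((pairWord 1 v).map (FreeAlgebra.ι R2)).prod) := by
    simp only [map_sum, map_smul, ← xmon_eq_mkAlgHom, hc]
  have hσ : ∑ v, c v * zGcoeff (fun _ : Fin 1 => J) v = sigmaWord J (pairWord u w) := by
    simpa [map_sum, sigmaFree_prod_map_ι, zGcoeff_eq_sigmaWord] using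
      (sigmaFree_eq_of_mk_eq (J := J) hmk).symm
  rw [hσ, sigmaWord_pairWord, hufac, hwfac, inversionsIn_ofFn_mul_of_isMinLC hustar huminus,
    inversionsIn_ofFn_mul_of_isMinLC hwstar hwminus]
  exact ⟨fun h => if_pos h, fun h => if_neg h⟩

/-- Lemma 3.3 / `l:sigmareversalinv`.  Let the simple star
network `G_J` have weighted path matrix `C`, and let `u, w ∈ S_n` have the
unique factorizations `u = u_- u^*`, `w = w_- w^*` (in the paper's product
convention; below `u = u^* ∘ u_-`, `w = w^* ∘ w_-` as functions) with
`u^*, w^* ∈ S_J` and `u_-, w_-` minimum-length coset representatives.  Then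
`σ_C(x^{u,w}) = q^{(ℓ(u^*)+ℓ(w^*))/2}` if `u⁻¹w ∈ S_J`, and `= 0` otherwise.
Here `σ_C(x^{u,w})` is evaluated by expanding `x^{u,w}` in the basis
`{x^{e,v}}` of the immanant space of `A_n(q)` (the unique coefficients `c`)
and applying `x^{e,v} ↦ [z_G] c_{1,v_1} ⋯ c_{n,v_n}`. -/
theorem sigma_simple_star_coset
    {n : ℕ} (J : Fin n × Fin n) (hJ : J.1 ≤ J.2)
    (u w ustar wstar uminus wminus : Perm (Fin n))
    (hustar : inSJ J ustar) (hwstar : inSJ J wstar)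
    (huminus : isMinLC J uminus) (hwminus : isMinLC J wminus)
    (hufac : u = ustar * uminus) (hwfac : w = wstar * wminus)
    (c : Perm (Fin n) → R2)
    (hc : xmon u w = ∑ v : Perm (Fin n), c v • xmon 1 v) :
    (inSJ J (w * u⁻¹) →
      ∑ v : Perm (Fin n), c v * zGcoeff (fun _ : Fin 1 => J) v =
        Qp ((len ustar + len wstar : ℕ) : ℤ)) ∧
    (¬ inSJ J (w * u⁻¹) →
      ∑ v : Perm (Fin n), c v * zGcoeff (fun _ : Fin 1 => J) v = 0) :=
  sigma_simple_star_coset_general J u w ustar wstar uminus wminus hustar hwstar huminus hwminus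
    hufac hwfac c hc

end
end
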